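/- The series ∑_p ( log(1 − 1/p) + 1/p ) over all primes p converges absolutely, and its value lies in the interval (−0.32, −0.31). -/

import Mathlib

/-!
Since `log (1 - x) + x = -∑_{k ≥ 2} x ^ k / k`, comparing the tail of this series with a geometric
series gives `-1 / (2 p (p - 1)) ≤ log (1 - 1/p) + 1/p ≤ 0`, hence absolute convergence by
comparison with `∑ 1/p²`. The lower bound telescopes, so the primes `p ≥ 128` contribute a
number in `[-1/254, 0]`, while the 31 primes below `128` are evaluated through the series
truncated after eight terms.
-/

open Finset

namespace Real

variable {x : ℝ}

lemma log_one_sub_add_sum_range_eq_neg_tsum (h0 : 0 ≤ x) (h1 : x < 1) (n : ℕ) :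
    log (1 - x) + ∑ i ∈ range n, x ^ (i + 1) / (i + 1) =
      -∑' i : ℕ, x ^ (i + n + 1) / ((i + n : ℕ) + 1) := by
  have h := hasSum_pow_div_log_of_abs_lt_one (by rwa [abs_of_nonneg h0])
  have hsplit := h.summable.sum_add_tsum_nat_add n
  rw [h.tsum_eq] at hsplit
  linarith

lemma log_one_sub_add_sum_range_nonpos (h0 : 0 ≤ x) (h1 : x < 1) (n : ℕ) :
    log (1 - x) + ∑ i ∈ range n, x ^ (i + 1) / (i + 1) ≤ 0 := by
  rw [log_one_sub_add_sum_range_eq_neg_tsum h0 h1, neg_nonpos]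
  exact tsum_nonneg fun i => by positivity

lemma neg_pow_div_le_log_one_sub_add_sum_range (h0 : 0 ≤ x) (h1 : x < 1) (n : ℕ) :
    -(x ^ (n + 1) / ((n + 1) * (1 - x))) ≤ log (1 - x) + ∑ i ∈ range n, x ^ (i + 1) / (i + 1) := by
  have hgeom := (hasSum_geometric_of_lt_one h0 h1).mul_left (x ^ (n + 1) / (n + 1))
  have hsum : Summable fun i : ℕ => x ^ (i + n + 1) / ((i + n : ℕ) + 1) :=
    ((hasSum_pow_div_log_of_abs_lt_one (by rwa [abs_of_nonneg h0])).summable.comp_injective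
      (add_left_injective n))
  have hterm (i : ℕ) : x ^ (i + n + 1) / ((i + n : ℕ) + 1) ≤ x ^ (n + 1) / (n + 1) * x ^ i := by
    rw [div_mul_eq_mul_div, ← pow_add, show n + 1 + i = i + n + 1 by ring]
    exact div_le_div_of_nonneg_left (by positivity) (by positivity) (by push_cast; linarith)
  rw [log_one_sub_add_sum_range_eq_neg_tsum h0 h1, neg_le_neg_iff]
  calc ∑' i : ℕ, x ^ (i + n + 1) / ((i + n : ℕ) + 1)
      ≤ x ^ (n + 1) / (n + 1) * (1 - x)⁻¹ := hasSum_le hterm hsum.hasSum hgeom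
    _ = x ^ (n + 1) / ((n + 1) * (1 - x)) := by field_simp

end Real

/-- `∑_p mertensTerm p = M - γ`, where `M` is the Meissel–Mertens constant and `γ` is Euler's. -/
noncomputable def mertensTerm (n : ℕ) : ℝ := Real.log (1 - 1 / (n : ℝ)) + 1 / (n : ℝ)

section mertensTerm

variable {n : ℕ}

lemma one_div_natCast_mem_Ico (hn : 1 < n) : 1 / (n : ℝ) ∈ Set.Ico 0 1 := by
  have : (1 : ℝ) < n := by exact_mod_cast hn
  exact ⟨by positivity, by rwa [div_lt_one (by positivity)]⟩

lemma mertensTerm_le_sub_sum_range (hn : 2 ≤ n) (k : ℕ) :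
    mertensTerm n ≤ 1 / n - ∑ i ∈ range k, (1 / (n : ℝ)) ^ (i + 1) / (i + 1) := by
  obtain ⟨h0, h1⟩ := one_div_natCast_mem_Ico hn
  have := Real.log_one_sub_add_sum_range_nonpos h0 h1 k
  rw [mertensTerm]
  linarith

lemma sub_sum_range_sub_le_mertensTerm (hn : 2 ≤ n) (k : ℕ) :
    1 / n - ∑ i ∈ range k, (1 / (n : ℝ)) ^ (i + 1) / (i + 1) -
      (1 / (n : ℝ)) ^ (k + 1) / ((k + 1) * (1 - 1 / n)) ≤ mertensTerm n := by
  obtain ⟨h0, h1⟩ := one_div_natCast_mem_Ico hn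
  have := Real.neg_pow_div_le_log_one_sub_add_sum_range h0 h1 k
  rw [mertensTerm]
  linarith

lemma mertensTerm_nonpos (hn : 2 ≤ n) : mertensTerm n ≤ 0 := by
  simpa using mertensTerm_le_sub_sum_range hn 1

lemma neg_one_div_two_mul_mul_sub_one_le_mertensTerm (hn : 2 ≤ n) :
    -(1 / (2 * n * (n - 1))) ≤ mertensTerm n := by
  have hn0 : (n : ℝ) ≠ 0 := by positivity
  have hn1 : (n : ℝ) - 1 ≠ 0 := by
    have : (2 : ℝ) ≤ n := by exact_mod_cast hn
    linarith
  refine le_of_eq_of_le ?_ (sub_sum_range_sub_le_mertensTerm hn 1)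
  norm_num
  field_simp

lemma abs_mertensTerm_le (hn : 2 ≤ n) : |mertensTerm n| ≤ 1 / (n : ℝ) ^ 2 := by
  have hn' : (2 : ℝ) ≤ n := by exact_mod_cast hn
  have hle : 1 / (2 * n * (n - 1)) ≤ 1 / (n : ℝ) ^ 2 :=
    one_div_le_one_div_of_le (by positivity) (by nlinarith)
  rw [abs_of_nonpos (mertensTerm_nonpos hn)]
  linarith [neg_one_div_two_mul_mul_sub_one_le_mertensTerm hn]

end mertensTerm

lemma summable_abs_mertensTerm : Summable fun p : Nat.Primes => |mertensTerm p| :=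
  ((Real.summable_one_div_nat_pow.2 one_lt_two).subtype {p | p.Prime}).of_nonneg_of_le
    (fun _ => abs_nonneg _) fun p => abs_mertensTerm_le p.2.two_le

lemma Nat.Primes.tsum_eq_sum_primesBelow_add_tsum {G : Type*} [AddCommGroup G] [TopologicalSpace G]
    [IsTopologicalAddGroup G] [T2Space G] {f : ℕ → G} (hf : Summable fun p : Nat.Primes => f p)
    (N : ℕ) :
    ∑' p : Nat.Primes, f p = ∑ p ∈ N.primesBelow, f p + ∑' i, {p | p.Prime}.indicator f (i + N) := by
  have hsum := (summable_subtype_iff_indicator (s := {p | p.Prime}) (f := f)).mp hf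
  calc ∑' p : Nat.Primes, f p = ∑' n, {p | p.Prime}.indicator f n := tsum_subtype _ f
    _ = ∑ n ∈ range N, {p | p.Prime}.indicator f n + ∑' i, {p | p.Prime}.indicator f (i + N) :=
      (hsum.sum_add_tsum_nat_add N).symm
    _ = _ := by simp [Nat.primesBelow, sum_filter, Set.indicator_apply]

section tail

variable (s : Set ℕ) {N : ℕ} (hN : 2 ≤ N)
include hN

lemma tsum_indicator_mertensTerm_nonpos : ∑' i, s.indicator mertensTerm (i + N) ≤ 0 :=
  tsum_nonpos fun _ => Set.indicator_apply_nonpos fun _ => mertensTerm_nonpos (by omega)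

lemma neg_one_div_le_tsum_indicator_mertensTerm :
    -(1 / (2 * ((N : ℝ) - 1))) ≤ ∑' i, s.indicator mertensTerm (i + N) := by
  set u : ℕ → ℝ := fun i => 1 / (2 * ((i : ℝ) + N - 1))
  have hN' : (2 : ℝ) ≤ N := by exact_mod_cast hN
  have hu_nonneg (i : ℕ) : 0 ≤ u i :=
    div_nonneg zero_le_one (by linarith [i.cast_nonneg (α := ℝ)])
  have hterm (i : ℕ) : -(u i - u (i + 1)) ≤ s.indicator mertensTerm (i + N) := by
    have hi : (0 : ℝ) ≤ i := i.cast_nonneg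
    have hu : u i - u (i + 1) = 1 / (2 * ((i + N : ℕ) : ℝ) * ((i + N : ℕ) - 1)) := by
      have h1 : (i : ℝ) + N - 1 ≠ 0 := by linarith
      have h2 : (i : ℝ) + N ≠ 0 := by linarith
      simp only [u]
      push_cast
      rw [show (i : ℝ) + 1 + N - 1 = i + N by ring]
      field_simp
      ring
    refine Set.le_indicator_apply (fun _ => ?_) fun _ => ?_
    · rw [hu]
      exact neg_one_div_two_mul_mul_sub_one_le_mertensTerm (by omega)
    · rw [neg_nonpos, sub_nonneg]
      exact one_div_le_one_div_of_le (by linarith) (by push_cast; linarith)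
  suffices ∑' i, -s.indicator mertensTerm (i + N) ≤ u 0 by
    rw [tsum_neg] at this
    simp only [u, Nat.cast_zero, zero_add] at this
    linarith
  refine Real.tsum_le_of_sum_range_le (fun i => neg_nonneg.2 ?_) fun n => ?_
  · exact Set.indicator_apply_nonpos fun _ => mertensTerm_nonpos (by omega)
  calc ∑ i ∈ range n, -s.indicator mertensTerm (i + N)
      ≤ ∑ i ∈ range n, (u i - u (i + 1)) := sum_le_sum fun i _ => by linarith [hterm i]
    _ = u 0 - u n := sum_range_sub' u n
    _ ≤ u 0 := sub_le_self _ (hu_nonneg n)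

end tail

lemma sum_primesBelow_128_mertensTerm_mem_Ioo :
    ∑ p ∈ Nat.primesBelow 128, mertensTerm p ∈ Set.Ioo (-0.3155) (-0.31) := by
  have htwo_le {p : ℕ} (hp : p ∈ Nat.primesBelow 128) : 2 ≤ p :=
    (Nat.prime_of_mem_primesBelow hp).two_le
  constructor
  · refine lt_of_lt_of_le ?_ (sum_le_sum fun p hp => sub_sum_range_sub_le_mertensTerm (htwo_le hp) 8)
    simp only [Nat.primesBelow, sum_filter, sum_range_succ, sum_range_zero]
    norm_num
  · refine lt_of_le_of_lt (sum_le_sum fun p hp => mertensTerm_le_sub_sum_range (htwo_le hp) 8) ?_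
    simp only [Nat.primesBelow, sum_filter, sum_range_succ, sum_range_zero]
    norm_num

/-- The series `∑_p (log(1 − 1/p) + 1/p)` over all primes converges absolutely,
and its value lies in `(−0.32, −0.31)`. -/
theorem sum_log_one_sub_inv_p : 
    Summable (fun p : Nat.Primes => |Real.log (1 - 1 / ((p : ℕ) : ℝ)) + 1 / ((p : ℕ) : ℝ)|) ∧
    (-0.32 : ℝ) < ∑' p : Nat.Primes, (Real.log (1 - 1 / ((p : ℕ) : ℝ)) + 1 / ((p : ℕ) : ℝ)) ∧
    (∑' p : Nat.Primes, (Real.log (1 - 1 / ((p : ℕ) : ℝ)) + 1 / ((p : ℕ) : ℝ))) < -0.31 := by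
  have hsplit := Nat.Primes.tsum_eq_sum_primesBelow_add_tsum summable_abs_mertensTerm.of_abs 128
  obtain ⟨hfinite_lower, hfinite_upper⟩ := sum_primesBelow_128_mertensTerm_mem_Ioo
  have htail_upper := tsum_indicator_mertensTerm_nonpos {p | p.Prime} (N := 128) (by norm_num)
  have htail_lower := neg_one_div_le_tsum_indicator_mertensTerm {p | p.Prime} (N := 128) (by norm_num)
  norm_num at htail_lower
  refine ⟨summable_abs_mertensTerm, ?_, ?_⟩
  · change _ < ∑' p : Nat.Primes, mertensTerm p
    linarith
  · change ∑' p : Nat.Primes, mertensTerm p < _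
    linarith
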